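/- arXiv:2405.02531 — 3 statements merged into one kernel-verified Lean document; each statement's English description precedes it below -/
import Mathlib

section
/- Let d_G(r₁,r₂,θ₁−θ₂) = (r₁² + r₂² − 2 r₁ r₂ cos(θ₁−θ₂))^{1/2}, and suppose r₁, r₂ > 0 and d_G(r₁,r₂,θ₁−θ₂) > 0. Then the determinant of the 2×2 matrix with first row (∂²d_G/∂r₁∂θ₁, ∂²d_G/∂θ₁²) and second row (∂³d_G/∂r₁∂θ₁², ∂³d_G/∂θ₁³) equals r₁ r₂³ (r₁ cos(θ₁−θ₂) − r₂)³ / d_G⁶. -/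
/-!
Write `u = θ₁ - θ₂` and `A = r₁ r₂`. Differentiating `d² = r₁² + r₂² - 2 A cos u` gives
`∂_θ d = A sin u / d` and `∂_r d = (r₁ - r₂ cos u) / d`, so away from `d = 0` every partial
derivative in the determinant is an explicit rational expression in `d`, `sin u`, `cos u`.
Clearing the powers of `d`, the determinant becomes a polynomial identity once `sin² u` is
replaced by `1 - cos² u` and `d²` by its defining expression.
-/

open Real

noncomputable section

/-- Partial derivative in the angular variable `θ₁` of a function of `(r₁, θ₁)`. -/
def pdTheta (f : ℝ → ℝ → ℝ) : ℝ → ℝ → ℝ := fun r θ => deriv (fun t => f r t) θ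

/-- Partial derivative in the radial variable `r₁` of a function of `(r₁, θ₁)`. -/
def pdR (f : ℝ → ℝ → ℝ) : ℝ → ℝ → ℝ := fun r θ => deriv (fun s => f s θ) r

/-- `d_G(r₁, r₂, θ₁ - θ₂)` as a function of `(r₁, θ₁)`, with `r₂, θ₂` held fixed. -/
def dGfun (r₂ θ₂ : ℝ) : ℝ → ℝ → ℝ :=
  fun r₁ θ₁ => Real.sqrt (r₁ ^ 2 + r₂ ^ 2 - 2 * r₁ * r₂ * Real.cos (θ₁ - θ₂))

section PartialDerivatives

variable {f g : ℝ → ℝ → ℝ} {U : Set (ℝ × ℝ)} {r θ : ℝ}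

theorem pdTheta_congr_of_isOpen (hU : IsOpen U) (hfg : ∀ p ∈ U, f p.1 p.2 = g p.1 p.2)
    (hp : (r, θ) ∈ U) : pdTheta f r θ = pdTheta g r θ := by
  have hslice : {t | (r, t) ∈ U} ∈ nhds θ :=
    (continuous_const.prodMk continuous_id).continuousAt.preimage_mem_nhds (hU.mem_nhds hp)
  exact Filter.EventuallyEq.deriv_eq (Filter.mem_of_superset hslice fun t ht => hfg _ ht)

theorem pdR_congr_of_isOpen (hU : IsOpen U) (hfg : ∀ p ∈ U, f p.1 p.2 = g p.1 p.2)
    (hp : (r, θ) ∈ U) : pdR f r θ = pdR g r θ := by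
  have hslice : {x | (x, θ) ∈ U} ∈ nhds r :=
    (continuous_id.prodMk continuous_const).continuousAt.preimage_mem_nhds (hU.mem_nhds hp)
  exact Filter.EventuallyEq.deriv_eq (Filter.mem_of_superset hslice fun x hx => hfg _ hx)

end PartialDerivatives

theorem hasDerivAt_sin_sub (θ₂ θ : ℝ) :
    HasDerivAt (fun t => sin (t - θ₂)) (cos (θ - θ₂)) θ := by
  simpa using ((hasDerivAt_id' θ).sub_const θ₂).sin

theorem hasDerivAt_cos_sub (θ₂ θ : ℝ) :
    HasDerivAt (fun t => cos (t - θ₂)) (-sin (θ - θ₂)) θ := by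
  simpa using ((hasDerivAt_id' θ).sub_const θ₂).cos

namespace dGfun

variable {r₂ θ₂ r θ : ℝ}

theorem sq (r₂ θ₂ r θ : ℝ) :
    dGfun r₂ θ₂ r θ ^ 2 = r ^ 2 + r₂ ^ 2 - 2 * r * r₂ * cos (θ - θ₂) := by
  refine sq_sqrt ?_
  nlinarith [sin_sq_add_cos_sq (θ - θ₂), sq_nonneg (r - r₂ * cos (θ - θ₂)),
    sq_nonneg (r₂ * sin (θ - θ₂))]

theorem isOpen_pos (r₂ θ₂ : ℝ) : IsOpen {p : ℝ × ℝ | 0 < dGfun r₂ θ₂ p.1 p.2} :=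
  isOpen_lt continuous_const (by unfold dGfun; fun_prop)

theorem hasDerivAt_theta (h : 0 < dGfun r₂ θ₂ r θ) :
    HasDerivAt (fun t => dGfun r₂ θ₂ r t) (r * r₂ * sin (θ - θ₂) / dGfun r₂ θ₂ r θ) θ := by
  have hsq : HasDerivAt (fun t => r ^ 2 + r₂ ^ 2 - 2 * r * r₂ * cos (t - θ₂))
      (2 * r * r₂ * sin (θ - θ₂)) θ := by
    simpa using ((hasDerivAt_cos_sub θ₂ θ).const_mul (2 * r * r₂)).const_sub (r ^ 2 + r₂ ^ 2)
  have hd := hsq.sqrt (sqrt_pos.mp h).ne'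
  rw [← show dGfun r₂ θ₂ r θ = √(r ^ 2 + r₂ ^ 2 - 2 * r * r₂ * cos (θ - θ₂)) from rfl] at hd
  exact hd.congr_deriv (by field_simp)

theorem hasDerivAt_r (h : 0 < dGfun r₂ θ₂ r θ) :
    HasDerivAt (fun x => dGfun r₂ θ₂ x θ) ((r - r₂ * cos (θ - θ₂)) / dGfun r₂ θ₂ r θ) r := by
  have hsq : HasDerivAt (fun x => x ^ 2 + r₂ ^ 2 - 2 * x * r₂ * cos (θ - θ₂))
      (2 * r - 2 * r₂ * cos (θ - θ₂)) r := by
    have := ((hasDerivAt_pow 2 r).add_const (r₂ ^ 2)).fun_sub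
      ((hasDerivAt_id' r).mul_const (2 * r₂ * cos (θ - θ₂)))
    exact (this.congr_deriv (by push_cast; ring)).congr_of_eventuallyEq
      (Filter.Eventually.of_forall fun x => by ring)
  have hd := hsq.sqrt (sqrt_pos.mp h).ne'
  rw [← show dGfun r₂ θ₂ r θ = √(r ^ 2 + r₂ ^ 2 - 2 * r * r₂ * cos (θ - θ₂)) from rfl] at hd
  exact hd.congr_deriv (by field_simp)

/- Closed forms of the partial derivatives of `d_G` where `d_G > 0`, left in the shape the
quotient rule produces. -/
def dθ (r₂ θ₂ r θ : ℝ) : ℝ := r * r₂ * sin (θ - θ₂) / dGfun r₂ θ₂ r θ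

def dθθ (r₂ θ₂ r θ : ℝ) : ℝ :=
  (r * r₂ * cos (θ - θ₂) * dGfun r₂ θ₂ r θ ^ 2 - (r * r₂ * sin (θ - θ₂)) ^ 2) /
    dGfun r₂ θ₂ r θ ^ 3

def dθθθ (r₂ θ₂ r θ : ℝ) : ℝ :=
  -(r * r₂ * sin (θ - θ₂)) * (dGfun r₂ θ₂ r θ ^ 4 +
      3 * (r * r₂ * cos (θ - θ₂) * dGfun r₂ θ₂ r θ ^ 2 - (r * r₂ * sin (θ - θ₂)) ^ 2)) /
    dGfun r₂ θ₂ r θ ^ 5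

def drθ (r₂ θ₂ r θ : ℝ) : ℝ :=
  r₂ * sin (θ - θ₂) * (dGfun r₂ θ₂ r θ ^ 2 - r * (r - r₂ * cos (θ - θ₂))) / dGfun r₂ θ₂ r θ ^ 3

def drθθ (r₂ θ₂ r θ : ℝ) : ℝ :=
  ((r₂ * cos (θ - θ₂) * dGfun r₂ θ₂ r θ ^ 2 + 2 * r * r₂ * cos (θ - θ₂) * (r - r₂ * cos (θ - θ₂)) -
        2 * r * (r₂ * sin (θ - θ₂)) ^ 2) * dGfun r₂ θ₂ r θ ^ 2 -
      3 * (r * r₂ * cos (θ - θ₂) * dGfun r₂ θ₂ r θ ^ 2 - (r * r₂ * sin (θ - θ₂)) ^ 2) *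
        (r - r₂ * cos (θ - θ₂))) /
    dGfun r₂ θ₂ r θ ^ 5

theorem hasDerivAt_dθ_theta (h : 0 < dGfun r₂ θ₂ r θ) :
    HasDerivAt (fun t => dθ r₂ θ₂ r t) (dθθ r₂ θ₂ r θ) θ := by
  refine (((hasDerivAt_sin_sub θ₂ θ).const_mul (r * r₂)).fun_div (hasDerivAt_theta h)
    h.ne').congr_deriv ?_
  rw [dθθ]
  field_simp

theorem hasDerivAt_dθ_r (h : 0 < dGfun r₂ θ₂ r θ) :
    HasDerivAt (fun x => dθ r₂ θ₂ x θ) (drθ r₂ θ₂ r θ) r := by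
  refine (((hasDerivAt_id' r).mul_const (r₂ * sin (θ - θ₂))).fun_div (hasDerivAt_r h)
    h.ne').congr_of_eventuallyEq (Filter.Eventually.of_forall fun x => ?_) |>.congr_deriv ?_
  · simp only [dθ]; ring
  · rw [drθ]
    field_simp

theorem hasDerivAt_dθθ_theta (h : 0 < dGfun r₂ θ₂ r θ) :
    HasDerivAt (fun t => dθθ r₂ θ₂ r t) (dθθθ r₂ θ₂ r θ) θ := by
  have hd := hasDerivAt_theta h
  have hnum := (((hasDerivAt_cos_sub θ₂ θ).const_mul (r * r₂)).fun_mul (hd.fun_pow 2)).fun_sub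
    (((hasDerivAt_sin_sub θ₂ θ).const_mul (r * r₂)).fun_pow 2)
  refine (hnum.fun_div (hd.fun_pow 3) (pow_ne_zero 3 h.ne')).congr_deriv ?_
  rw [dθθθ]
  field_simp
  ring

theorem hasDerivAt_dθθ_r (h : 0 < dGfun r₂ θ₂ r θ) :
    HasDerivAt (fun x => dθθ r₂ θ₂ x θ) (drθθ r₂ θ₂ r θ) r := by
  have hd := hasDerivAt_r h
  have hnum := (((hasDerivAt_id' r).mul_const (r₂ * cos (θ - θ₂))).fun_mul (hd.fun_pow 2)).fun_sub
    (((hasDerivAt_id' r).mul_const (r₂ * sin (θ - θ₂))).fun_pow 2)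
  refine (hnum.fun_div (hd.fun_pow 3) (pow_ne_zero 3 h.ne')).congr_of_eventuallyEq
    (Filter.Eventually.of_forall fun x => ?_) |>.congr_deriv ?_
  · simp only [dθθ]; ring
  · rw [drθθ]
    field_simp
    ring

theorem pdTheta_eq (h : 0 < dGfun r₂ θ₂ r θ) : pdTheta (dGfun r₂ θ₂) r θ = dθ r₂ θ₂ r θ :=
  (hasDerivAt_theta h).deriv

theorem pdTheta_pdTheta_eq (h : 0 < dGfun r₂ θ₂ r θ) :
    pdTheta (pdTheta (dGfun r₂ θ₂)) r θ = dθθ r₂ θ₂ r θ := by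
  rw [pdTheta_congr_of_isOpen (isOpen_pos r₂ θ₂) (fun _ hp => pdTheta_eq hp) h]
  exact (hasDerivAt_dθ_theta h).deriv

theorem pdTheta_pdTheta_pdTheta_eq (h : 0 < dGfun r₂ θ₂ r θ) :
    pdTheta (pdTheta (pdTheta (dGfun r₂ θ₂))) r θ = dθθθ r₂ θ₂ r θ := by
  rw [pdTheta_congr_of_isOpen (isOpen_pos r₂ θ₂) (fun _ hp => pdTheta_pdTheta_eq hp) h]
  exact (hasDerivAt_dθθ_theta h).deriv

theorem pdR_pdTheta_eq (h : 0 < dGfun r₂ θ₂ r θ) :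
    pdR (pdTheta (dGfun r₂ θ₂)) r θ = drθ r₂ θ₂ r θ := by
  rw [pdR_congr_of_isOpen (isOpen_pos r₂ θ₂) (fun _ hp => pdTheta_eq hp) h]
  exact (hasDerivAt_dθ_r h).deriv

theorem pdR_pdTheta_pdTheta_eq (h : 0 < dGfun r₂ θ₂ r θ) :
    pdR (pdTheta (pdTheta (dGfun r₂ θ₂))) r θ = drθθ r₂ θ₂ r θ := by
  rw [pdR_congr_of_isOpen (isOpen_pos r₂ θ₂) (fun _ hp => pdTheta_pdTheta_eq hp) h]
  exact (hasDerivAt_dθθ_r h).deriv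

theorem drθ_mul_dθθθ_sub_dθθ_mul_drθθ (h : 0 < dGfun r₂ θ₂ r θ) :
    drθ r₂ θ₂ r θ * dθθθ r₂ θ₂ r θ - dθθ r₂ θ₂ r θ * drθθ r₂ θ₂ r θ =
      r * r₂ ^ 3 * (r * cos (θ - θ₂) - r₂) ^ 3 / dGfun r₂ θ₂ r θ ^ 6 := by
  have hd2 := dGfun.sq r₂ θ₂ r θ
  have hs2 := sin_sq (θ - θ₂)
  rw [drθ, dθθθ, dθθ, drθθ]
  generalize dGfun r₂ θ₂ r θ = d at h hd2 ⊢
  generalize sin (θ - θ₂) = s at hs2 ⊢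
  generalize cos (θ - θ₂) = c at hs2 hd2 ⊢
  field_simp
  rw [hs2, show d ^ 4 = (d ^ 2) ^ 2 by ring, hd2]
  ring

end dGfun

theorem stmt6_general (r₁ r₂ θ₁ θ₂ : ℝ)
    (hd : 0 < dGfun r₂ θ₂ r₁ θ₁) :
    pdR (pdTheta (dGfun r₂ θ₂)) r₁ θ₁ * pdTheta (pdTheta (pdTheta (dGfun r₂ θ₂))) r₁ θ₁ -
      pdTheta (pdTheta (dGfun r₂ θ₂)) r₁ θ₁ * pdR (pdTheta (pdTheta (dGfun r₂ θ₂))) r₁ θ₁ =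
      r₁ * r₂ ^ 3 * (r₁ * Real.cos (θ₁ - θ₂) - r₂) ^ 3 / (dGfun r₂ θ₂ r₁ θ₁) ^ 6 := by
  rw [dGfun.pdR_pdTheta_eq hd, dGfun.pdTheta_pdTheta_pdTheta_eq hd, dGfun.pdTheta_pdTheta_eq hd,
    dGfun.pdR_pdTheta_pdTheta_eq hd]
  exact dGfun.drθ_mul_dθθθ_sub_dθθ_mul_drθθ hd

theorem stmt6 (r₁ r₂ θ₁ θ₂ : ℝ) (hr₁ : 0 < r₁) (hr₂ : 0 < r₂)
    (hd : 0 < dGfun r₂ θ₂ r₁ θ₁) :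
    pdR (pdTheta (dGfun r₂ θ₂)) r₁ θ₁ * pdTheta (pdTheta (pdTheta (dGfun r₂ θ₂))) r₁ θ₁ -
      pdTheta (pdTheta (dGfun r₂ θ₂)) r₁ θ₁ * pdR (pdTheta (pdTheta (dGfun r₂ θ₂))) r₁ θ₁ =
      r₁ * r₂ ^ 3 * (r₁ * Real.cos (θ₁ - θ₂) - r₂) ^ 3 / (dGfun r₂ θ₂ r₁ θ₁) ^ 6 :=
  stmt6_general r₁ r₂ θ₁ θ₂ hd

end
end

section
/- Let α ∈ (−1,1)∖{0}. Then there exists a constant C, depending only on α, such that for every φ ∈ ℝ: ∫₀^∞ |(e^{−s} − cos φ) sinh(αs)| / (cosh s − cos φ) ds ≤ C and ∫₀^∞ |sin φ · cosh(αs)| / (cosh s − cos φ) ds ≤ C. -/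
open MeasureTheory Real Set
open scoped ENNReal

/-!
With `c = cos φ`, the denominator satisfies `cosh s - c ≥ s² / 2 + (1 - c)` for all `s` and
`cosh s - c ≥ eˢ / 8` for `s ≥ 1`. On `(1, ∞)` both numerators are at most `2 cosh (α s)`, so both
integrands are dominated by `16 e^{-(1 - |α|) s}`. On `(0, 1]` the first integrand is at most `2e`,
since `|e^{-s} - c| ≤ s + (1 - c)` and `|sinh (α s)| ≤ e s`. The second one is not bounded uniformly
in `φ`: with `b = √(1 - c)` one has `|sin φ| ≤ 2b` and `cosh s - c ≥ (s + b)² / 4`, so it is dominated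
by `8e · b / (s + b)²`, whose integral over `(0, ∞)` is at most `8e` whatever `b` is.
-/

namespace Real

theorem one_add_sq_div_two_le_cosh (x : ℝ) : 1 + x ^ 2 / 2 ≤ cosh x := by
  have hhalf : |x / 2| ^ 2 ≤ sinh |x / 2| ^ 2 :=
    pow_le_pow_left₀ (abs_nonneg _) (self_le_sinh_iff.2 (abs_nonneg _)) 2
  rw [← abs_sinh, sq_abs, sq_abs] at hhalf
  have hcosh := cosh_two_mul (x / 2)
  rw [mul_div_cancel₀ x two_ne_zero, cosh_sq] at hcosh
  linarith

theorem sinh_le_mul_exp (x : ℝ) : sinh x ≤ x * exp x := by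
  have h := add_one_le_exp (-(2 * x))
  have hsplit : exp (-x) = exp x * exp (-(2 * x)) := by rw [← exp_add]; ring_nf
  rw [sinh_eq, hsplit]
  nlinarith [exp_pos x]

theorem abs_sinh_le_cosh (x : ℝ) : |sinh x| ≤ cosh x := by
  rw [abs_sinh, ← cosh_abs]
  exact (sinh_lt_cosh _).le

theorem cosh_le_exp_abs (x : ℝ) : cosh x ≤ exp |x| := by
  rw [← cosh_abs, cosh_eq]
  linarith [exp_le_exp.2 (neg_le_self (abs_nonneg x))]

end Real

theorem setLIntegral_ofReal_deriv_le {f f' : ℝ → ℝ} {s : Set ℝ} {a b : ℝ} (hs : MeasurableSet s)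
    (hf' : ∀ x ∈ s, HasDerivAt f (f' x) x) (hf : MonotoneOn f s) (hmaps : MapsTo f s (Icc a b)) :
    ∫⁻ x in s, ENNReal.ofReal (f' x) ≤ ENNReal.ofReal (b - a) := by
  rw [lintegral_deriv_eq_volume_image_of_monotoneOn hs (fun x hx ↦ (hf' x hx).hasDerivWithinAt) hf,
    ← Real.volume_Icc]
  exact measure_mono hmaps.image_subset

theorem lintegral_Ioi_ofReal_mul_exp_neg_le {K β : ℝ} (hK : 0 ≤ K) (hβ : 0 < β) :
    ∫⁻ x in Ioi 0, ENNReal.ofReal (K * exp (-(β * x))) ≤ ENNReal.ofReal (K / β) := by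
  have hderiv : ∀ x ∈ Ioi (0 : ℝ),
      HasDerivAt (fun y ↦ -(K / β) * exp (-(β * y))) (K * exp (-(β * x))) x := by
    intro x _
    have h : HasDerivAt (fun y ↦ -(β * y)) (-β) x :=
      ((hasDerivAt_id x).const_mul β).fun_neg.congr_deriv (by simp)
    exact (h.exp.const_mul (-(K / β))).congr_deriv (by field_simp)
  have hmono : MonotoneOn (fun y ↦ -(K / β) * exp (-(β * y))) (Ioi 0) := by
    intro x _ y _ hxy
    have : exp (-(β * y)) ≤ exp (-(β * x)) := exp_le_exp.2 (by nlinarith)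
    have : 0 ≤ K / β := by positivity
    nlinarith
  have hmaps : MapsTo (fun y ↦ -(K / β) * exp (-(β * y))) (Ioi 0) (Icc (-(K / β)) 0) := by
    intro x hx
    have : exp (-(β * x)) ≤ 1 := exp_le_one_iff.2 (by nlinarith [mem_Ioi.1 hx])
    have : 0 ≤ K / β := by positivity
    constructor <;> nlinarith [exp_pos (-(β * x))]
  simpa using setLIntegral_ofReal_deriv_le measurableSet_Ioi hderiv hmono hmaps

theorem lintegral_Ioi_ofReal_mul_div_add_sq_le {K b : ℝ} (hK : 0 ≤ K) (hb : 0 ≤ b) :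
    ∫⁻ x in Ioi 0, ENNReal.ofReal (K * (b / (x + b) ^ 2)) ≤ ENNReal.ofReal K := by
  rcases hb.eq_or_lt with rfl | hb
  · simp
  have hderiv : ∀ x ∈ Ioi (0 : ℝ),
      HasDerivAt (fun y ↦ -(K * b / (y + b))) (K * (b / (x + b) ^ 2)) x := by
    intro x hx
    have hxb : x + b ≠ 0 := by have := mem_Ioi.1 hx; positivity
    exact ((hasDerivAt_const x (K * b)).div ((hasDerivAt_id x).add_const b) hxb).neg.congr_deriv
      (by simp; ring)
  have hmono : MonotoneOn (fun y ↦ -(K * b / (y + b))) (Ioi 0) := by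
    intro x hx y _ hxy
    have : b / (y + b) ≤ b / (x + b) :=
      div_le_div_of_nonneg_left hb.le (by linarith [mem_Ioi.1 hx]) (by linarith)
    simpa [mul_div_assoc] using mul_le_mul_of_nonneg_left this hK
  have hmaps : MapsTo (fun y ↦ -(K * b / (y + b))) (Ioi 0) (Icc (-K) 0) := by
    intro x hx
    have hxb : 0 < x + b := by linarith [mem_Ioi.1 hx]
    have : b / (x + b) ≤ 1 := (div_le_one hxb).2 (by linarith [mem_Ioi.1 hx])
    have : 0 ≤ b / (x + b) := by positivity
    constructor <;> simp only [mul_div_assoc] <;> nlinarith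
  simpa using setLIntegral_ofReal_deriv_le measurableSet_Ioi hderiv hmono hmaps

theorem sq_div_two_add_sub_le_cosh_sub (s c : ℝ) : s ^ 2 / 2 + (1 - c) ≤ cosh s - c := by
  linarith [one_add_sq_div_two_le_cosh s]

theorem exp_div_eight_le_cosh_sub {s c : ℝ} (hs : 1 ≤ s) (hc : c ≤ 1) :
    exp s / 8 ≤ cosh s - c := by
  have he : (2.7182818283 : ℝ) < exp s := exp_one_gt_d9.trans_le (exp_le_exp.2 hs)
  rw [cosh_eq]
  linarith [exp_pos (-s)]

theorem abs_exp_neg_sub_mul_sinh_div_cosh_sub_le {α c s : ℝ} (hα : |α| ≤ 1) (hc : c ≤ 1)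
    (hs0 : 0 < s) (hs1 : s ≤ 1) :
    |(exp (-s) - c) * sinh (α * s)| / (cosh s - c) ≤ 2 * exp 1 := by
  have hD := sq_div_two_add_sub_le_cosh_sub s c
  have hDpos : 0 < cosh s - c := by nlinarith
  have hexp : |exp (-s) - c| ≤ s + (1 - c) := by
    have := exp_le_one_iff.2 (neg_nonpos.2 hs0.le)
    have := add_one_le_exp (-s)
    exact abs_le.2 ⟨by linarith, by linarith⟩
  have hsinh : |sinh (α * s)| ≤ s * exp 1 := by
    have hαs : |α * s| ≤ s := by
      rw [abs_mul, abs_of_pos hs0]; nlinarith [abs_nonneg α]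
    calc |sinh (α * s)| = sinh |α * s| := abs_sinh _
      _ ≤ sinh s := sinh_le_sinh.2 hαs
      _ ≤ s * exp s := sinh_le_mul_exp s
      _ ≤ s * exp 1 := by gcongr
  rw [div_le_iff₀ hDpos, abs_mul]
  calc |exp (-s) - c| * |sinh (α * s)| ≤ (s + (1 - c)) * (s * exp 1) :=
        mul_le_mul hexp hsinh (abs_nonneg _) (by linarith)
    _ ≤ 2 * exp 1 * (s ^ 2 / 2 + (1 - c)) := by
        have : (1 - c) * s ≤ 1 - c := mul_le_of_le_one_right (by linarith) hs1
        nlinarith [exp_pos 1]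
    _ ≤ 2 * exp 1 * (cosh s - c) := by gcongr

theorem abs_sin_mul_cosh_div_cosh_sub_cos_le {α φ s : ℝ} (hα : |α| ≤ 1) (hs0 : 0 < s)
    (hs1 : s ≤ 1) :
    |sin φ * cosh (α * s)| / (cosh s - cos φ) ≤
      8 * exp 1 * (√(1 - cos φ) / (s + √(1 - cos φ)) ^ 2) := by
  set b := √(1 - cos φ)
  have ht : 0 ≤ 1 - cos φ := sub_nonneg.2 (cos_le_one φ)
  have hb2 : b ^ 2 = 1 - cos φ := sq_sqrt ht
  have hb : 0 ≤ b := sqrt_nonneg _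
  have hsin : |sin φ| ≤ 2 * b := by
    refine abs_le_of_sq_le_sq ?_ (by positivity)
    nlinarith [sin_sq_add_cos_sq φ, neg_one_le_cos φ]
  have hcosh : cosh (α * s) ≤ exp 1 := by
    have hαs : |α * s| ≤ 1 := by
      rw [abs_mul, abs_of_pos hs0]; nlinarith [abs_nonneg α]
    exact (cosh_le_exp_abs _).trans (exp_le_exp.2 hαs)
  have hD : (s + b) ^ 2 / 4 ≤ cosh s - cos φ := by
    nlinarith [sq_div_two_add_sub_le_cosh_sub s (cos φ), sq_nonneg (s - b)]
  have hsb : 0 < (s + b) ^ 2 := by positivity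
  rw [div_le_iff₀ (by linarith), abs_mul, abs_of_pos (cosh_pos _)]
  calc |sin φ| * cosh (α * s) ≤ 2 * b * exp 1 :=
        mul_le_mul hsin hcosh (cosh_pos _).le (by positivity)
    _ = 8 * exp 1 * (b / (s + b) ^ 2) * ((s + b) ^ 2 / 4) := by field_simp; ring
    _ ≤ 8 * exp 1 * (b / (s + b) ^ 2) * (cosh s - cos φ) := by gcongr

theorem abs_exp_neg_sub_mul_sinh_le_two_mul_cosh {α c s : ℝ} (hc : |c| ≤ 1) (hs : 0 ≤ s) :
    |(exp (-s) - c) * sinh (α * s)| ≤ 2 * cosh (α * s) := by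
  have hexp : |exp (-s) - c| ≤ 2 := by
    have := exp_le_one_iff.2 (neg_nonpos.2 hs)
    have := exp_pos (-s)
    have := abs_le.1 hc
    exact abs_le.2 ⟨by linarith, by linarith⟩
  rw [abs_mul]
  exact mul_le_mul hexp (abs_sinh_le_cosh _) (abs_nonneg _) zero_le_two

theorem lintegral_Ioi_one_div_cosh_sub_le {N : ℝ → ℝ} {α c : ℝ} (hα : |α| < 1) (hc : c ≤ 1)
    (hN : ∀ s, 1 < s → N s ≤ 2 * cosh (α * s)) :
    ∫⁻ s in Ioi 1, ENNReal.ofReal (N s / (cosh s - c)) ≤ ENNReal.ofReal (16 / (1 - |α|)) := by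
  have hpoint : ∀ s ∈ Ioi (1 : ℝ), ENNReal.ofReal (N s / (cosh s - c)) ≤
      ENNReal.ofReal (16 * exp (-((1 - |α|) * s))) := by
    intro s (hs : 1 < s)
    have hD := exp_div_eight_le_cosh_sub hs.le hc
    have hcosh : cosh (α * s) ≤ exp (|α| * s) := by
      simpa [abs_mul, abs_of_pos (zero_lt_one.trans hs)] using cosh_le_exp_abs (α * s)
    have hsplit : exp (|α| * s) = 8 * exp (-((1 - |α|) * s)) * (exp s / 8) := by
      rw [mul_comm 8, mul_assoc, mul_div_cancel₀ _ (by norm_num : (8 : ℝ) ≠ 0), ← exp_add]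
      ring_nf
    refine ENNReal.ofReal_le_ofReal ((div_le_iff₀ ((by positivity : (0 : ℝ) < _).trans_le hD)).2 ?_)
    calc N s ≤ 2 * cosh (α * s) := hN s hs
      _ ≤ 2 * exp (|α| * s) := by gcongr
      _ = 16 * exp (-((1 - |α|) * s)) * (exp s / 8) := by rw [hsplit]; ring
      _ ≤ 16 * exp (-((1 - |α|) * s)) * (cosh s - c) := by gcongr
  calc ∫⁻ s in Ioi 1, ENNReal.ofReal (N s / (cosh s - c))
      ≤ ∫⁻ s in Ioi 1, ENNReal.ofReal (16 * exp (-((1 - |α|) * s))) :=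
        setLIntegral_mono' measurableSet_Ioi hpoint
    _ ≤ ∫⁻ s in Ioi 0, ENNReal.ofReal (16 * exp (-((1 - |α|) * s))) :=
        lintegral_mono_set (Ioi_subset_Ioi zero_le_one)
    _ ≤ ENNReal.ofReal (16 / (1 - |α|)) :=
        lintegral_Ioi_ofReal_mul_exp_neg_le (by norm_num) (by linarith)

theorem lintegral_Ioc_abs_exp_neg_sub_mul_sinh_div_cosh_sub_le {α c : ℝ} (hα : |α| ≤ 1)
    (hc : c ≤ 1) :
    ∫⁻ s in Ioc 0 1, ENNReal.ofReal (|(exp (-s) - c) * sinh (α * s)| / (cosh s - c)) ≤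
      ENNReal.ofReal (2 * exp 1) :=
  calc ∫⁻ s in Ioc 0 1, ENNReal.ofReal (|(exp (-s) - c) * sinh (α * s)| / (cosh s - c))
      ≤ ∫⁻ _ in Ioc (0 : ℝ) 1, ENNReal.ofReal (2 * exp 1) :=
        setLIntegral_mono' measurableSet_Ioc fun _ hs ↦ ENNReal.ofReal_le_ofReal
          (abs_exp_neg_sub_mul_sinh_div_cosh_sub_le hα hc hs.1 hs.2)
    _ = ENNReal.ofReal (2 * exp 1) := by simp

theorem lintegral_Ioc_abs_sin_mul_cosh_div_cosh_sub_cos_le {α : ℝ} (hα : |α| ≤ 1) (φ : ℝ) :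
    ∫⁻ s in Ioc 0 1, ENNReal.ofReal (|sin φ * cosh (α * s)| / (cosh s - cos φ)) ≤
      ENNReal.ofReal (8 * exp 1) :=
  calc ∫⁻ s in Ioc 0 1, ENNReal.ofReal (|sin φ * cosh (α * s)| / (cosh s - cos φ))
      ≤ ∫⁻ s in Ioc 0 1,
          ENNReal.ofReal (8 * exp 1 * (√(1 - cos φ) / (s + √(1 - cos φ)) ^ 2)) :=
        setLIntegral_mono' measurableSet_Ioc fun _ hs ↦ ENNReal.ofReal_le_ofReal
          (abs_sin_mul_cosh_div_cosh_sub_cos_le hα hs.1 hs.2)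
    _ ≤ ∫⁻ s in Ioi 0,
          ENNReal.ofReal (8 * exp 1 * (√(1 - cos φ) / (s + √(1 - cos φ)) ^ 2)) :=
        lintegral_mono_set Ioc_subset_Ioi_self
    _ ≤ ENNReal.ofReal (8 * exp 1) :=
        lintegral_Ioi_ofReal_mul_div_add_sq_le (by positivity) (sqrt_nonneg _)

theorem stmt17_general (α : ℝ) (hα : α ∈ Set.Ioo (-1 : ℝ) 1) :
    ∃ C : ℝ, ∀ φ : ℝ,
      (∫⁻ s in Set.Ioi (0 : ℝ),
          ENNReal.ofReal (|(Real.exp (-s) - Real.cos φ) * Real.sinh (α * s)| /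
            (Real.cosh s - Real.cos φ)) ≤ ENNReal.ofReal C) ∧
      (∫⁻ s in Set.Ioi (0 : ℝ),
          ENNReal.ofReal (|Real.sin φ * Real.cosh (α * s)| /
            (Real.cosh s - Real.cos φ)) ≤ ENNReal.ofReal C) := by
  have hα1 : |α| < 1 := abs_lt.2 hα
  have hsplit : ∀ f : ℝ → ℝ≥0∞,
      ∫⁻ s in Ioi 0, f s = (∫⁻ s in Ioc 0 1, f s) + ∫⁻ s in Ioi 1, f s := fun f ↦ by
    rw [← Ioc_union_Ioi_eq_Ioi zero_le_one, lintegral_union measurableSet_Ioi Ioc_disjoint_Ioi_same]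
  have htail : 0 ≤ 16 / (1 - |α|) := div_nonneg (by norm_num) (by linarith)
  refine ⟨8 * exp 1 + 16 / (1 - |α|), fun φ ↦ ⟨?_, ?_⟩⟩ <;>
    rw [hsplit, ENNReal.ofReal_add (by positivity) htail] <;> refine add_le_add ?_ ?_
  · exact (lintegral_Ioc_abs_exp_neg_sub_mul_sinh_div_cosh_sub_le hα1.le (cos_le_one φ)).trans
      (ENNReal.ofReal_le_ofReal (by linarith [exp_pos 1]))
  · exact lintegral_Ioi_one_div_cosh_sub_le hα1 (cos_le_one φ) fun s hs ↦
      abs_exp_neg_sub_mul_sinh_le_two_mul_cosh (abs_cos_le_one φ) (zero_le_one.trans hs.le)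
  · exact lintegral_Ioc_abs_sin_mul_cosh_div_cosh_sub_cos_le hα1.le φ
  · refine lintegral_Ioi_one_div_cosh_sub_le hα1 (cos_le_one φ) fun s _ ↦ ?_
    rw [abs_mul, abs_of_pos (cosh_pos _)]
    nlinarith [abs_sin_le_one φ, cosh_pos (α * s)]

theorem stmt17 (α : ℝ) (hα : α ∈ Set.Ioo (-1 : ℝ) 1) (hα0 : α ≠ 0) :
    ∃ C : ℝ, ∀ φ : ℝ,
      (∫⁻ s in Set.Ioi (0 : ℝ),
          ENNReal.ofReal (|(Real.exp (-s) - Real.cos φ) * Real.sinh (α * s)| /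
            (Real.cosh s - Real.cos φ)) ≤ ENNReal.ofReal C) ∧
      (∫⁻ s in Set.Ioi (0 : ℝ),
          ENNReal.ofReal (|Real.sin φ * Real.cosh (α * s)| /
            (Real.cosh s - Real.cos φ)) ≤ ENNReal.ofReal C) :=
  stmt17_general α hα
end

section
/- Let d_G(r₁,r₂;θ) = √(r₁² + r₂² − 2 r₁ r₂ cos θ). There exist ε₀ ∈ (0, π/2) and c > 0 such that for all r₁, r₂ > 0 with 1/4 ≤ r₁ + r₂ ≤ 2 and all θ with |θ − π| ≤ ε₀, the second derivative in θ satisfies |∂²_θ d_G(r₁,r₂;θ)| ≥ c r₁ r₂. -/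
/-! Write `A = r₁² + r₂²`, `B = 2 r₁ r₂` and `s = √(A - B cos θ)`; differentiating twice gives
`B cos θ / (2 s) - B² sin² θ / (4 s³)`. Near `θ = π` the cosine is at most `-1/2`, and since
`s ≤ r₁ + r₂ ≤ 2` the first term is at most `-B / 8 = -r₁ r₂ / 4`, while the second is never
positive. -/

open Real Filter Topology

section SqrtSubMulCos

variable {A B u : ℝ}

theorem hasDerivAt_sqrt_sub_mul_cos (h : 0 < A - B * cos u) :
    HasDerivAt (fun u => √(A - B * cos u)) (B * sin u / (2 * √(A - B * cos u))) u := by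
  have hinner : HasDerivAt (fun u => A - B * cos u) (B * sin u) u := by
    simpa using ((hasDerivAt_cos u).const_mul B).const_sub A
  exact hinner.sqrt h.ne'

theorem deriv_sqrt_sub_mul_cos_eventuallyEq (h : 0 < A - B * cos u) :
    deriv (fun u => √(A - B * cos u)) =ᶠ[𝓝 u]
      fun u => B * sin u / (2 * √(A - B * cos u)) := by
  have hopen : IsOpen {u : ℝ | 0 < A - B * cos u} :=
    isOpen_lt continuous_const (continuous_const.sub (continuous_const.mul continuous_cos))
  filter_upwards [hopen.mem_nhds h] with v hv
  exact (hasDerivAt_sqrt_sub_mul_cos hv).deriv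

theorem hasDerivAt_deriv_sqrt_sub_mul_cos (h : 0 < A - B * cos u) :
    HasDerivAt (deriv fun u => √(A - B * cos u))
      (B * cos u / (2 * √(A - B * cos u)) - B ^ 2 * sin u ^ 2 / (4 * √(A - B * cos u) ^ 3))
      u := by
  have hs : 0 < √(A - B * cos u) := sqrt_pos.mpr h
  have hnum : HasDerivAt (fun u => B * sin u) (B * cos u) u := (hasDerivAt_sin u).const_mul B
  have hden := (hasDerivAt_sqrt_sub_mul_cos h).const_mul 2
  refine HasDerivAt.congr_of_eventuallyEq ?_ (deriv_sqrt_sub_mul_cos_eventuallyEq h)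
  refine (hnum.fun_div hden (by positivity)).congr_deriv ?_
  field_simp
  ring

theorem deriv_deriv_sqrt_sub_mul_cos_le (h : 0 < A - B * cos u) (hB : 0 ≤ B)
    (hcos : cos u ≤ -(1 / 2)) (hs : √(A - B * cos u) ≤ 2) :
    deriv (deriv fun u => √(A - B * cos u)) u ≤ -(B / 8) := by
  rw [(hasDerivAt_deriv_sqrt_sub_mul_cos h).deriv]
  set s := √(A - B * cos u)
  have hspos : 0 < s := sqrt_pos.mpr h
  have hcurv : 0 ≤ B ^ 2 * sin u ^ 2 / (4 * s ^ 3) := by positivity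
  have hmain : B * cos u / (2 * s) ≤ -(B / 8) := by
    rw [div_le_iff₀ (by positivity)]
    nlinarith [mul_le_mul_of_nonneg_left hcos hB]
  linarith

end SqrtSubMulCos

theorem cos_le_neg_half_of_abs_sub_pi_le {θ : ℝ} (hθ : |θ - π| ≤ π / 3) : cos θ ≤ -(1 / 2) := by
  have h := cos_le_cos_of_nonneg_of_le_pi (abs_nonneg (θ - π)) (by linarith [pi_pos]) hθ
  rw [cos_abs, cos_sub_pi, cos_pi_div_three] at h
  linarith

theorem sqrt_law_of_cosines_le_add {r₁ r₂ : ℝ} (hr₁ : 0 ≤ r₁) (hr₂ : 0 ≤ r₂) (θ : ℝ) :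
    √(r₁ ^ 2 + r₂ ^ 2 - 2 * r₁ * r₂ * cos θ) ≤ r₁ + r₂ := by
  rw [sqrt_le_left (by positivity)]
  nlinarith [neg_one_le_cos θ, mul_nonneg hr₁ hr₂]

theorem stmt19 :
    ∃ ε₀ : ℝ, ε₀ ∈ Set.Ioo 0 (Real.pi / 2) ∧ ∃ c : ℝ, 0 < c ∧
      ∀ r₁ r₂ θ : ℝ, 0 < r₁ → 0 < r₂ → 1 / 4 ≤ r₁ + r₂ → r₁ + r₂ ≤ 2 →
        |θ - Real.pi| ≤ ε₀ →
        c * (r₁ * r₂) ≤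
          |deriv (fun t =>
              deriv (fun u => Real.sqrt (r₁ ^ 2 + r₂ ^ 2 - 2 * r₁ * r₂ * Real.cos u)) t) θ| := by
  refine ⟨π / 3, ⟨by positivity, by linarith [pi_pos]⟩, 1 / 4, by norm_num, ?_⟩
  intro r₁ r₂ θ hr₁ hr₂ _ hsum hθ
  have hcos := cos_le_neg_half_of_abs_sub_pi_le hθ
  have hpos : 0 < r₁ ^ 2 + r₂ ^ 2 - 2 * r₁ * r₂ * cos θ := by nlinarith [mul_pos hr₁ hr₂]
  have hs := (sqrt_law_of_cosines_le_add hr₁.le hr₂.le θ).trans hsum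
  have hle := deriv_deriv_sqrt_sub_mul_cos_le hpos (by positivity) hcos hs
  calc 1 / 4 * (r₁ * r₂) ≤ -deriv (deriv fun u => √(r₁ ^ 2 + r₂ ^ 2 - 2 * r₁ * r₂ * cos u)) θ := by
        linarith
    _ ≤ _ := neg_le_abs _
end
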